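/- Let t: Σ* ⇀ Ω* be a rational function with suffix-closed domain, and let X ⊆ dom(t) be a context-free language such that the growth of the image language t(X) is exponential. Then the t-growth of X grows exponentially and the ⟨t⟩-growth of X grows exponentially. -/

import Mathlib

/-! Common definitions for sliding-window / visibly pushdown formalizations. -/

/-- `γ` grows polynomially: `γ(n) ∈ O(n^k)` for some `k`. -/
def GrowsPolynomially (γ : ℕ → ℕ) : Prop :=
  ∃ k C : ℕ, ∀ n : ℕ, γ n ≤ C * (n + 1) ^ k

/-- `γ` grows exponentially: there is `c > 1` with `γ(n) ≥ c^n` for infinitely many `n`. -/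
def GrowsExponentially (γ : ℕ → ℕ) : Prop :=
  ∃ c : ℝ, 1 < c ∧ ∀ m : ℕ, ∃ n : ℕ, m ≤ n ∧ c ^ n ≤ (γ n : ℝ)

/-- A set of words is suffix-closed. -/
def SuffixClosed {α : Type} (X : Set (List α)) : Prop :=
  ∀ x ∈ X, ∀ s : List α, s <:+ x → s ∈ X

/-- Domain of a partial function presented with `Option`. -/
def pdom {α β : Type} (t : List α → Option β) : Set (List α) := {x | t x ≠ none}

/-- The `t`-growth of `X`: the number of values of `t` on words of `X` of length at most `n`. -/
noncomputable def growthOf {α : Type} {Y : Type} (t : List α → Y) (X : Set (List α)) (n : ℕ) : ℕ :=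
  (t '' {x | x ∈ X ∧ x.length ≤ n}).ncard

/-- Growth of a language: number of its words of length at most `n`. -/
noncomputable def langGrowth {β : Type} (L : Set (List β)) (n : ℕ) : ℕ :=
  {y | y ∈ L ∧ y.length ≤ n}.ncard

/-- Suffix expansion of a (total or partial) function: the tuple of values on all
nonempty suffixes `a₁⋯aₙ, a₂⋯aₙ, …, aₙ` of the input. -/
def cev {α : Type} {Y : Type} (t : List α → Y) (x : List α) : List Y :=
  x.tails.dropLast.map t

/-- Image of `X` under the partial function `t`. -/
def optImage {α β : Type} (t : List α → Option β) (X : Set (List α)) : Set β :=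
  {y | ∃ x ∈ X, t x = some y}

/-- A language is bounded if it is contained in `w₁* w₂* ⋯ w_k*`. -/
def BoundedLang {β : Type} (L : Set (List β)) : Prop :=
  ∃ ws : List (List β), ∀ x ∈ L, ∃ ms : List ℕ, ms.length = ws.length ∧
    x = (List.zipWith (fun (w : List β) (m : ℕ) => (List.replicate m w).flatten) ws ms).flatten

/-- `{u,v}*`: all concatenations of copies of `u` and `v`. -/
def UVStar {α : Type} (u v : List α) : Set (List α) :=
  {w | ∃ l : List (List α), (∀ p ∈ l, p = u ∨ p = v) ∧ w = l.flatten}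

/-- `{u,v}^{≤ n}`: concatenations of at most `n` words, each equal to `u` or `v`. -/
def UVPow {α : Type} (u v : List α) (n : ℕ) : Set (List α) :=
  {w | ∃ l : List (List α), (∀ p ∈ l, p = u ∨ p = v) ∧ l.length ≤ n ∧ w = l.flatten}

/-- The set `{u₂,v₂}{u,v}* Z`. -/
def FoolingSet {α : Type} (u₂ v₂ u v : List α) (Z : Set (List α)) : Set (List α) :=
  {x | ∃ a w z, (a = u₂ ∨ a = v₂) ∧ w ∈ UVStar u v ∧ z ∈ Z ∧ x = a ++ (w ++ z)}

/-- Linear fooling scheme for a partial function `t`. -/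
def IsLinearFoolingScheme {α Y : Type} (t : List α → Option Y)
    (u₂ v₂ u v : List α) (Z : Set (List α)) : Prop :=
  u₂ <:+ u ∧ v₂ <:+ v ∧ u₂.length = v₂.length ∧
  FoolingSet u₂ v₂ u v Z ⊆ pdom t ∧
  ∃ C : ℕ, ∀ n : ℕ, ∃ z ∈ Z, z.length ≤ C * (n + 1) ∧
    ∀ w ∈ UVPow u v n, t (u₂ ++ (w ++ z)) ≠ t (v₂ ++ (w ++ z))

/-- `X` contains a linear fooling set for `t`. -/
def ContainsLinearFoolingSet {α Y : Type} (t : List α → Option Y) (X : Set (List α)) : Prop :=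
  ∃ u₂ v₂ u v Z, IsLinearFoolingScheme t u₂ v₂ u v Z ∧ FoolingSet u₂ v₂ u v Z ⊆ X

/-! ### Transducers and rational functions -/

/-- A finite-state transducer over `(α, β)` with terminal output function. -/
structure Transducer (α β : Type) where
  Q : Type
  finQ : Fintype Q
  I : Set Q
  F : Set Q
  Δ : Set (Q × List α × List β × Q)
  finΔ : Δ.Finite
  o : Q → List β

namespace Transducer

variable {α β : Type}

/-- A run from `p` to `r` with input `x` and output `y`. -/
inductive Run (A : Transducer α β) : A.Q → List α → List β → A.Q → Prop
  | nil (q : A.Q) : Run A q [] [] q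
  | cons {p q r : A.Q} {x₁ x : List α} {y₁ y : List β} :
      (p, x₁, y₁, q) ∈ A.Δ → Run A q x y r → Run A p (x₁ ++ x) (y₁ ++ y) r

/-- The transduction defined by a transducer. -/
def T (A : Transducer α β) : Set (List α × List β) :=
  {p | ∃ q₀ q y, q₀ ∈ A.I ∧ q ∈ A.F ∧ A.Run q₀ p.1 y q ∧ p.2 = y ++ A.o q}

end Transducer

/-- A partial function is rational if its graph is the transduction of some transducer. -/
def IsRationalFun {α β : Type} (t : List α → Option (List β)) : Prop :=
  ∃ A : Transducer α β, ∀ x y, t x = some y ↔ (x, y) ∈ A.T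

/-! ### Right congruences, suffix expansions, critical tuples -/

/-- A right congruence: an equivalence relation compatible with appending on the right. -/
def IsRightCongruence {α : Type} (r : List α → List α → Prop) : Prop :=
  Equivalence r ∧ ∀ x y z : List α, r x y → r (x ++ z) (y ++ z)

/-- Suffix expansion of a relation: words of the same length whose corresponding
nonempty suffixes are all related. -/
def SuffixExpansion {α : Type} (r : List α → List α → Prop) (x y : List α) : Prop :=
  x.length = y.length ∧ ∀ i < x.length, r (x.drop i) (y.drop i)

/-- Number of `r`-classes of words of length at most `n`. -/
noncomputable def classCount {α : Type} (r : List α → List α → Prop) (n : ℕ) : ℕ :=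
  Set.ncard {C : Set (List α) | ∃ x : List α, x.length ≤ n ∧ C = {y | r x y}}

/-- A relation has finite index if it has finitely many classes. -/
def FiniteIndex {α : Type} (r : List α → List α → Prop) : Prop :=
  Set.Finite {C : Set (List α) | ∃ x : List α, C = {y | r x y}}

/-- Critical tuple in a right congruence. -/
def IsCriticalTuple {α : Type} (r : List α → List α → Prop) (u₂ v₂ u v : List α) : Prop :=
  1 ≤ u₂.length ∧ u₂.length = v₂.length ∧ u₂ <:+ u ∧ v₂ <:+ v ∧
  ∀ w ∈ UVStar u v, ¬ r (u₂ ++ w) (v₂ ++ w)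

/-- The Myhill–Nerode right congruence of a language. -/
def MNrel {α : Type} (L : Set (List α)) (x y : List α) : Prop :=
  ∀ z : List α, x ++ z ∈ L ↔ y ++ z ∈ L

/-! ### Suffix distance and the canonical right congruence of a rational function -/

/-- Longest common prefix. -/
def cpre {β : Type} [DecidableEq β] : List β → List β → List β
  | a :: x, b :: y => if a = b then a :: cpre x y else []
  | _, _ => []

/-- `‖x,y‖ = |x| + |y| − 2|x ∧ y|`, where `x ∧ y` is the longest common suffix. -/
def suffDist {β : Type} [DecidableEq β] (x y : List β) : ℕ :=
  x.length + y.length - 2 * (cpre x.reverse y.reverse).length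

/-- Value of a partial function (defaulting to the empty word off the domain). -/
def pval {α β : Type} (t : List α → Option (List β)) (x : List α) : List β :=
  (t x).getD []

/-- The right congruence `R_t` of Reutenauer–Schützenberger. -/
def Rt {α β : Type} [DecidableEq β] (t : List α → Option (List β)) (u v : List α) : Prop :=
  (∀ z : List α, u ++ z ∈ pdom t ↔ v ++ z ∈ pdom t) ∧
  Set.Finite {d : ℕ | ∃ w : List α, u ++ w ∈ pdom t ∧ v ++ w ∈ pdom t ∧
      d = suffDist (pval t (u ++ w)) (pval t (v ++ w))}

/-- Two partial functions are adjacent. -/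
def Adjacent {α β : Type} [DecidableEq β] (t₁ t₂ : List α → Option (List β)) : Prop :=
  Set.Finite {d : ℕ | ∃ w : List α, w ∈ pdom t₁ ∧ w ∈ pdom t₂ ∧
      d = suffDist (pval t₁ w) (pval t₂ w)}

/-! ### Visibly pushdown automata -/

/-- Kinds of letters of a pushdown alphabet. -/
inductive VPKind : Type
  | call : VPKind
  | ret : VPKind
  | intern : VPKind
deriving DecidableEq

/-- A visibly pushdown automaton over the pushdown alphabet determined by `pa`.
The bottom-of-stack symbol `⊥` is represented implicitly by the empty stack. -/
structure VPA (α : Type) (pa : α → VPKind) where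
  Q : Type
  finQ : Fintype Q
  Γ : Type
  finΓ : Fintype Γ
  q₀ : Q
  F : Set Q
  δc : Q → α → Γ × Q
  δr : Q → α → Option Γ → Q
  δi : Q → α → Q

namespace VPA

variable {α : Type} {pa : α → VPKind}

/-- One step of the VPA on a configuration (stack with top at the head, state). -/
def step (A : VPA α pa) (c : List A.Γ × A.Q) (a : α) : List A.Γ × A.Q :=
  match pa a with
  | VPKind.call => ((A.δc c.2 a).1 :: c.1, (A.δc c.2 a).2)
  | VPKind.intern => (c.1, A.δi c.2 a)
  | VPKind.ret =>
    match c.1 with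
    | [] => ([], A.δr c.2 a none)
    | γ :: st => (st, A.δr c.2 a (some γ))

/-- Extended transition function on words. -/
def run (A : VPA α pa) (c : List A.Γ × A.Q) (w : List α) : List A.Γ × A.Q :=
  w.foldl A.step c

/-- The language accepted by a VPA (from the initial configuration `⊥q₀`). -/
def acceptsLang (A : VPA α pa) : Set (List α) :=
  {w | (A.run ([], A.q₀) w).2 ∈ A.F}

/-- Language accepted from a configuration. -/
def AccLang (A : VPA α pa) (c : List A.Γ × A.Q) : Set (List α) :=
  {w | (A.run c w).2 ∈ A.F}

/-- The reachable configurations. -/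
def rConf (A : VPA α pa) : Set (List A.Γ × A.Q) :=
  Set.range (fun w => A.run ([], A.q₀) w)

end VPA

/-- A language is a visibly pushdown language over the pushdown alphabet `pa`. -/
def IsVPL {α : Type} (pa : α → VPKind) (L : Set (List α)) : Prop :=
  ∃ A : VPA α pa, L = A.acceptsLang

/-- Well-matched words over a pushdown alphabet. -/
inductive WellMatched {α : Type} (pa : α → VPKind) : List α → Prop
  | nil : WellMatched pa []
  | intern (a : α) : pa a = VPKind.intern → WellMatched pa [a]
  | append {u v : List α} : WellMatched pa u → WellMatched pa v → WellMatched pa (u ++ v)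
  | wrap {w : List α} {a b : α} : WellMatched pa w → pa a = VPKind.call → pa b = VPKind.ret →
      WellMatched pa (a :: (w ++ [b]))

/-- Descending words: concatenations of well-matched words and return letters. -/
def Descending {α : Type} (pa : α → VPKind) (w : List α) : Prop :=
  ∃ l : List (List α),
    (∀ p ∈ l, WellMatched pa p ∨ ∃ b : α, pa b = VPKind.ret ∧ p = [b]) ∧ w = l.flatten

/-- Length-lexicographic order on configurations `⊥αq` (stacks compared bottom-first). -/
def ConfLe {Q Γ : Type} (ltQ : LinearOrder Q) (ltΓ : LinearOrder Γ)
    (c d : List Γ × Q) : Prop :=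
  c.1.length < d.1.length ∨
    (c.1.length = d.1.length ∧
      (List.Lex ltΓ.lt c.1.reverse d.1.reverse ∨ (c.1 = d.1 ∧ ltQ.le c.2 d.2)))

/-- `rep` chooses from each equivalence class of reachable configurations the
length-lexicographically least representative. -/
def IsRepFun {α : Type} {pa : α → VPKind} (A : VPA α pa)
    (ltQ : LinearOrder A.Q) (ltΓ : LinearOrder A.Γ)
    (rep : List A.Γ × A.Q → List A.Γ × A.Q) : Prop :=
  ∀ c ∈ A.rConf, rep c ∈ A.rConf ∧ A.AccLang (rep c) = A.AccLang c ∧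
    ∀ c' ∈ A.rConf, A.AccLang c' = A.AccLang c → ConfLe ltQ ltΓ (rep c) c'

/-- `ν_A(w)`: the representative of the configuration reached on `w`. -/
def nuA {α : Type} {pa : α → VPKind} (A : VPA α pa)
    (rep : List A.Γ × A.Q → List A.Γ × A.Q) (w : List α) : List A.Γ × A.Q :=
  rep (A.run ([], A.q₀) w)

/-- `σ₀(w)`: the states representing the Myhill–Nerode classes of the nonempty suffixes. -/
def sigma0 {α : Type} {pa : α → VPKind} (A : VPA α pa)
    (rep : List A.Γ × A.Q → List A.Γ × A.Q) (w : List α) : List A.Q :=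
  w.tails.dropLast.map fun s => (nuA A rep s).2

/-- `φ(w)`: the state transformation of a well-matched word. -/
def phiVPA {α : Type} {pa : α → VPKind} (A : VPA α pa) (w : List α) : A.Q → A.Q :=
  fun p => (A.run ([], p) w).2

/-- `σ₁(w) = φ(w) q₂ ⋯ qₙ`, a word over the alphabet `Q^Q ∪ Q`. -/
def sigma1 {α : Type} {pa : α → VPKind} (A : VPA α pa)
    (rep : List A.Γ × A.Q → List A.Γ × A.Q) (w : List α) : List ((A.Q → A.Q) ⊕ A.Q) :=
  Sum.inl (phiVPA A w) :: ((sigma0 A rep w).tail.map Sum.inr)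

/-! ### Real-time right transducers -/

/-- A real-time right transducer (reads its input from right to left). -/
structure RightTransducer (α β : Type) where
  Q : Type
  finQ : Fintype Q
  F : Set Q
  I : Set Q
  Δ : Set (Q × α × List β × Q)
  finΔ : Δ.Finite
  o : Q → List β

namespace RightTransducer

variable {α β : Type}

/-- Input word of a sequence of transitions. -/
def inputOf {Q : Type} (ts : List (Q × α × List β × Q)) : List α :=
  ts.map fun tr => tr.2.1

/-- Output word of a sequence of transitions. -/
def outputOf {Q : Type} (ts : List (Q × α × List β × Q)) : List β :=
  (ts.map fun tr => tr.2.2.1).flatten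

/-- `IsRunFrom A q ts p`: `ts` is a run on its input from the (rightmost) state `p`
to the (leftmost) state `q`; the transitions are listed left to right. -/
def IsRunFrom (A : RightTransducer α β) : A.Q → List (A.Q × α × List β × A.Q) → A.Q → Prop
  | q, [], p => q = p
  | q, tr :: ts, p => tr ∈ A.Δ ∧ tr.1 = q ∧ IsRunFrom A tr.2.2.2 ts p

/-- There is a run on `w` from `p` (right) to `q` (left). -/
def RunOn (A : RightTransducer α β) (q : A.Q) (w : List α) (p : A.Q) : Prop :=
  ∃ ts, A.IsRunFrom q ts p ∧ inputOf ts = w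

/-- `q ⪯ p`: there is a run from `p` to `q`. -/
def Below (A : RightTransducer α β) (q p : A.Q) : Prop :=
  ∃ w, A.RunOn q w p

/-- The partial function defined by a right transducer. -/
def Defines (A : RightTransducer α β) (t : List α → Option (List β)) : Prop :=
  ∀ x y, t x = some y ↔ ∃ p q ts, p ∈ A.F ∧ q ∈ A.I ∧ A.IsRunFrom p ts q ∧
    inputOf ts = x ∧ y = A.o p ++ outputOf ts

/-- Every state occurs on some initial accepting run. -/
def Trim (A : RightTransducer α β) : Prop :=
  ∀ s : A.Q, ∃ p q ts₁ ts₂, p ∈ A.F ∧ q ∈ A.I ∧ A.IsRunFrom p ts₁ s ∧ A.IsRunFrom s ts₂ q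

/-- Every input word has at most one initial accepting run. -/
def Unambiguous (A : RightTransducer α β) : Prop :=
  ∀ p p' q q' ts ts', p ∈ A.F → p' ∈ A.F → q ∈ A.I → q' ∈ A.I →
    A.IsRunFrom p ts q → A.IsRunFrom p' ts' q' → inputOf ts = inputOf ts' →
    p = p' ∧ ts = ts'

/-- `w` is guarded by `p`: some run on `w` from `p` stays in the SCC of `p`. -/
def Guarded (A : RightTransducer α β) (p : A.Q) (w : List α) : Prop :=
  ∃ q', A.RunOn q' w p ∧ A.Below p q'

/-- The transducer is well-behaved: the terminal outputs of guarded accepting runs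
from the same state on words of equal length coincide. -/
def WellBehaved (A : RightTransducer α β) : Prop :=
  ∀ (p q q' : A.Q) ts ts', q ∈ A.F → q' ∈ A.F →
    A.IsRunFrom q ts p → A.IsRunFrom q' ts' p →
    A.Guarded p (inputOf ts) → A.Guarded p (inputOf ts') →
    (inputOf ts).length = (inputOf ts').length →
    A.o q ++ outputOf ts = A.o q' ++ outputOf ts'

end RightTransducer

/-! ### The Parikh-like map Ψ -/

/-- `Ψ(w)`: each letter of `w` paired with its position counted from the right (1-based). -/
def Psi {α : Type} (w : List α) : Set (α × ℕ) :=
  {p | ∃ i : ℕ, w[i]? = some p.1 ∧ p.2 = w.length - i}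

/-- `Ψ(L) = ⋃_{w ∈ L} Ψ(w)`. -/
def PsiL {α : Type} (L : Set (List α)) : Set (α × ℕ) :=
  ⋃ w ∈ L, Psi w

/-!
The core is a linear bound: if `t` is rational and `X` context-free, every `y ∈ t(X)` is the
image of some `x ∈ X` with `|x| = O(|y|)`. Then the words of `t(X)` of length at most `n` are
among the values of `t` on words of `X` of length at most `C (n + 1)`, which makes the `t`-growth
exponential; and `⟨t⟩ x` determines `t x`, so the `⟨t⟩`-growth dominates the `t`-growth.

For the linear bound, split the transitions of a transducer for `t` so that each step reads at
most one letter, and synchronise a derivation of `x` with a run on `x`. Each subtree then carries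
a signature (the states before and after it, and its nonterminal) and an output. Subtrees with
empty output can be replaced by ones with input of bounded length. A level that writes nothing
itself and has a single child with nonempty output passes its output on unchanged, so a chain of
such levels can be cut at a repeated signature and has length at most the number of signatures.
Below such a chain every child with nonempty output has strictly shorter output, and induction on
`|y|` gives `|x| + K ≤ 2 K |y|`.
-/

section RelPath

variable {γ : Type*} {r : γ → γ → Prop}

/-- An `r`-path from `a` to `b`, recorded by the list of its vertices other than `b`. -/
inductive RelPath (r : γ → γ → Prop) : γ → γ → List γ → Prop
  | nil (a) : RelPath r a a []
  | cons {a b c l} : r a b → RelPath r b c l → RelPath r a c (a :: l)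

lemma RelPath.exists_suffix_of_mem {a b c l} (h : RelPath r a b l) (hc : c ∈ l) :
    ∃ l', l' <:+ l ∧ RelPath r c b l' := by
  induction h with
  | nil => simp at hc
  | @cons a _ _ l hab hrest ih =>
    rcases List.mem_cons.1 hc with rfl | hc
    · exact ⟨_, List.suffix_rfl, .cons hab hrest⟩
    · obtain ⟨l', hl', hpath⟩ := ih hc
      exact ⟨l', hl'.trans (List.suffix_cons a l), hpath⟩

lemma RelPath.mem_of_mem {S : Set γ} (hdom : ∀ a b, r a b → a ∈ S) {a b l}
    (h : RelPath r a b l) : ∀ z ∈ l, z ∈ S := by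
  induction h with
  | nil => simp
  | cons hab _ ih => exact List.forall_mem_cons.2 ⟨hdom _ _ hab, ih⟩

lemma Relation.ReflTransGen.exists_relPath_nodup {a b} (h : Relation.ReflTransGen r a b) :
    ∃ l, l.Nodup ∧ RelPath r a b l := by
  induction h using Relation.ReflTransGen.head_induction_on with
  | refl => exact ⟨[], List.nodup_nil, .nil _⟩
  | @head c d hcd _ ih =>
    obtain ⟨l, hnd, hpath⟩ := ih
    by_cases hc : c ∈ l
    · obtain ⟨l', hl', hpath'⟩ := hpath.exists_suffix_of_mem hc
      exact ⟨l', hnd.sublist hl'.sublist, hpath'⟩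
    · exact ⟨c :: l, List.nodup_cons.2 ⟨hc, hnd⟩, .cons hcd hpath⟩

lemma Relation.ReflTransGen.exists_relPath_length_le {S : Set γ} (hS : S.Finite)
    (hdom : ∀ a b, r a b → a ∈ S) {a b} (h : Relation.ReflTransGen r a b) :
    ∃ l, RelPath r a b l ∧ l.length ≤ S.ncard := by
  classical
  obtain ⟨l, hnd, hpath⟩ := h.exists_relPath_nodup
  refine ⟨l, hpath, ?_⟩
  rw [← List.toFinset_card_of_nodup hnd, ← Set.ncard_coe_finset]
  exact Set.ncard_le_ncard (fun z hz => hpath.mem_of_mem hdom z (by simpa using hz)) hS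

end RelPath

lemma List.sum_map_le_sum_map_filter_add {γ : Type*} (l : List γ) (p : γ → Bool) (f : γ → ℕ)
    {B : ℕ} (h : ∀ c ∈ l, p c = false → f c ≤ B) :
    (l.map f).sum ≤ ((l.filter p).map f).sum + B * l.length := by
  induction l with
  | nil => simp
  | cons c l ih =>
    have ih := ih fun c hc => h c (List.mem_cons_of_mem _ hc)
    cases hc : p c
    · simp only [List.filter_cons, hc, Bool.false_eq_true, if_false, List.map_cons,
        List.sum_cons, List.length_cons]
      linarith [h c List.mem_cons_self hc]
    · simp only [List.filter_cons, hc, if_true, List.map_cons, List.sum_cons, List.length_cons]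
      linarith

lemma List.sum_map_add_mul_length_le {γ : Type*} (l : List γ) (a b : γ → ℕ) {K : ℕ}
    (h : ∀ c ∈ l, a c + K ≤ b c) : (l.map a).sum + K * l.length ≤ (l.map b).sum := by
  induction l with
  | nil => simp
  | cons c l ih =>
    have := ih fun c hc => h c (List.mem_cons_of_mem _ hc)
    simp only [List.map_cons, List.sum_cons, List.length_cons]
    linarith [h c List.mem_cons_self]

lemma List.mem_tails_of_cons_mem_tails {α : Type*} {a : α} {w l : List α}
    (h : a :: w ∈ l.tails) : w ∈ l.tails :=
  (List.mem_tails _ _).2 ((List.suffix_cons a w).trans ((List.mem_tails _ _).1 h))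

lemma Set.Finite.exists_length_bound {ι γ : Type*} {P : ι → List γ → Prop} {S : Set ι}
    (hS : S.Finite) (hP : ∀ i x, P i x → i ∈ S) :
    ∃ B, ∀ i x, P i x → ∃ x', P i x' ∧ x'.length ≤ B := by
  classical
  let len i := if h : ∃ x, P i x then h.choose.length else 0
  obtain ⟨B, hB⟩ := (hS.image len).bddAbove
  refine ⟨B, fun i x h => ⟨_, (⟨x, h⟩ : ∃ x, P i x).choose_spec, ?_⟩⟩
  have := hB ⟨i, hP i x h, rfl⟩
  simpa [len, dif_pos (⟨x, h⟩ : ∃ x, P i x)] using this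

namespace Transducer

variable {α β : Type} {A : Transducer α β} {g : ContextFreeGrammar α}

variable (A) in
/-- States of the letter-to-letter normalisation of `A`: the states of `A`, and the pairs of a
transition of `A` with the part of its input that is still to be read. -/
abbrev LState : Type := A.Q ⊕ Σ d : A.Δ, {w : List α // w ∈ d.1.2.1.tails}

noncomputable instance : Fintype A.LState := by
  classical
  haveI := A.finQ
  haveI := A.finΔ.fintype
  infer_instance

variable (A) in
inductive LStep : A.LState → Option α → List β → A.LState → Prop
  | enter {p x y q} (h : (p, x, y, q) ∈ A.Δ) :
      LStep (.inl p) none y (.inr ⟨⟨_, h⟩, x, (List.mem_tails _ _).2 List.suffix_rfl⟩)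
  | read (d : A.Δ) {a : α} {w : List α} (h : a :: w ∈ d.1.2.1.tails) :
      LStep (.inr ⟨d, a :: w, h⟩) (some a) [] (.inr ⟨d, w, List.mem_tails_of_cons_mem_tails h⟩)
  | exit (d : A.Δ) (h : [] ∈ d.1.2.1.tails) :
      LStep (.inr ⟨d, [], h⟩) none [] (.inl d.1.2.2.2)

variable (A) in
inductive LRun : A.LState → List α → List β → A.LState → Prop
  | nil (q) : LRun q [] [] q
  | cons {q q' r a x y₁ y} : A.LStep q a y₁ q' → LRun q' x y r →
      LRun q (a.toList ++ x) (y₁ ++ y) r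

namespace LRun

lemma append {q s r u v y y'} (h₁ : A.LRun q u y s) (h₂ : A.LRun s v y' r) :
    A.LRun q (u ++ v) (y ++ y') r := by
  induction h₁ with
  | nil => exact h₂
  | cons hstep _ ih => simpa only [List.append_assoc] using cons hstep (ih h₂)

lemma single {q a y r} (h : A.LStep q a y r) : A.LRun q a.toList y r := by
  simpa using cons h (nil r)

lemma exists_split_cons {q r y} {a : α} {x : List α} (h : A.LRun q (a :: x) y r) :
    ∃ s y₁ y₂, y = y₁ ++ y₂ ∧ A.LRun q [a] y₁ s ∧ A.LRun s x y₂ r := by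
  generalize hax : a :: x = ax at h
  induction h with
  | nil => cases hax
  | @cons q q' r b x' y₁ y₂ hstep hrest ih =>
    cases b with
    | none =>
      obtain ⟨s, z₁, z₂, rfl, h₁, h₂⟩ := ih hax
      exact ⟨s, y₁ ++ z₁, z₂, (List.append_assoc ..).symm, by simpa using cons hstep h₁, h₂⟩
    | some b =>
      obtain ⟨rfl, rfl⟩ : b = a ∧ x' = x := by simpa using hax.symm
      exact ⟨q', y₁, y₂, rfl, single hstep, hrest⟩

lemma read_rest (d : A.Δ) :
    ∀ (w : List α) (h : w ∈ d.1.2.1.tails),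
      A.LRun (.inr ⟨d, w, h⟩) w [] (.inr ⟨d, [], (List.mem_tails _ _).2 List.nil_suffix⟩)
  | [], _ => nil _
  | a :: w, h => by
    simpa using cons (LStep.read d h) (read_rest d w (List.mem_tails_of_cons_mem_tails h))

end LRun

lemma lRun_of_mem {p x y q} (h : (p, x, y, q) ∈ A.Δ) : A.LRun (.inl p) x y (.inl q) := by
  simpa using ((LRun.single (LStep.enter h)).append (LRun.read_rest _ x _)).append
    (LRun.single (LStep.exit ⟨_, h⟩ _))

lemma Run.lRun {p x y q} (h : A.Run p x y q) : A.LRun (.inl p) x y (.inl q) := by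
  induction h with
  | nil q => exact .nil _
  | cons hmem _ ih => exact (lRun_of_mem hmem).append ih

variable (A) in
/-- The invariant that translates letter runs ending in `.inl qf` back into runs of `A`. -/
def RunsFrom (qf : A.Q) : A.LState → List α → List β → Prop
  | .inl p, x, y => A.Run p x y qf
  | .inr ⟨d, w, _⟩, x, y => ∃ x₂, x = w ++ x₂ ∧ A.Run d.1.2.2.2 x₂ y qf

lemma LRun.runsFrom {s x y qf} (h : A.LRun s x y (.inl qf)) : A.RunsFrom qf s x y := by
  generalize hr : (Sum.inl qf : A.LState) = r at h
  induction h with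
  | nil => subst hr; exact .nil qf
  | cons hstep _ ih =>
    specialize ih hr
    cases hstep with
    | enter hmem =>
      obtain ⟨x₂, rfl, hrun⟩ := ih
      simpa [RunsFrom] using Run.cons hmem hrun
    | read d h =>
      obtain ⟨x₂, rfl, hrun⟩ := ih
      exact ⟨x₂, rfl, hrun⟩
    | exit d h => exact ⟨_, rfl, ih⟩

lemma mem_T_iff_lRun {x : List α} {y : List β} :
    (x, y) ∈ A.T ↔ ∃ qi ∈ A.I, ∃ qf ∈ A.F, ∃ y', A.LRun (.inl qi) x y' (.inl qf) ∧
      y = y' ++ A.o qf := by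
  constructor
  · rintro ⟨qi, qf, y', hI, hF, hrun, hy⟩
    exact ⟨qi, hI, qf, hF, y', hrun.lRun, hy⟩
  · rintro ⟨qi, hI, qf, hF, y', hrun, hy⟩
    exact ⟨qi, qf, y', hI, hF, hrun.runsFrom, hy⟩

variable (A g) in
/-- `A.Parse g n q s q' x y`: the sentential form `s` derives `x` by a derivation of height `n`
which is synchronised with a letter run of `A` from `q` to `q'` reading `x` and writing `y`. -/
inductive Parse : ℕ → A.LState → List (Symbol α g.NT) → A.LState → List α → List β → Prop
  | nil {q q' y} : A.LRun q [] y q' → Parse 0 q [] q' [] y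
  | terminal {n q q₁ q' a s x y₁ y₂} : A.LRun q [a] y₁ q₁ → Parse n q₁ s q' x y₂ →
      Parse (n + 1) q (.terminal a :: s) q' (a :: x) (y₁ ++ y₂)
  | nonterminal {m n q q₁ q' s u x y₁ y₂} {r : ContextFreeRule α g.NT} : r ∈ g.rules →
      Parse m q r.output q₁ u y₁ → Parse n q₁ s q' x y₂ →
      Parse (max m n + 1) q (.nonterminal r.input :: s) q' (u ++ x) (y₁ ++ y₂)

variable (A g) in
def Parses (q : A.LState) (s : List (Symbol α g.NT)) (q' : A.LState) (x : List α)
    (y : List β) : Prop :=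
  ∃ n, A.Parse g n q s q' x y

namespace Parses

lemma nil {q q' y} (h : A.LRun q [] y q') : A.Parses g q [] q' [] y := ⟨0, .nil h⟩

lemma terminal {q q₁ q' a s x y₁ y₂} (h : A.LRun q [a] y₁ q₁) (h' : A.Parses g q₁ s q' x y₂) :
    A.Parses g q (.terminal a :: s) q' (a :: x) (y₁ ++ y₂) := by
  obtain ⟨n, h'⟩ := h'
  exact ⟨_, .terminal h h'⟩

lemma nonterminal {q q₁ q' s u x y₁ y₂} {r : ContextFreeRule α g.NT} (hr : r ∈ g.rules)
    (h₁ : A.Parses g q r.output q₁ u y₁) (h₂ : A.Parses g q₁ s q' x y₂) :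
    A.Parses g q (.nonterminal r.input :: s) q' (u ++ x) (y₁ ++ y₂) := by
  obtain ⟨m, h₁⟩ := h₁
  obtain ⟨n, h₂⟩ := h₂
  exact ⟨_, .nonterminal hr h₁ h₂⟩

lemma sound {q s q' x y} (h : A.Parses g q s q' x y) :
    g.Derives s (x.map .terminal) ∧ A.LRun q x y q' := by
  obtain ⟨n, h⟩ := h
  induction h with
  | nil hrun => exact ⟨.refl _, hrun⟩
  | terminal hrun _ ih =>
    exact ⟨by simpa using ih.1.append_left [.terminal _], by simpa using hrun.append ih.2⟩
  | @nonterminal m n q q₁ q' s u x y₁ y₂ r hr _ _ ih₁ ih₂ =>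
    refine ⟨?_, ih₁.2.append ih₂.2⟩
    have hrule : g.Derives (.nonterminal r.input :: s) (r.output ++ s) :=
      .single ⟨r, hr, ContextFreeRule.Rewrites.head s⟩
    simpa using (hrule.trans (ih₁.1.append_right s)).trans (ih₂.1.append_left _)

lemma lRun_append {q₀ q q' y₀ s x y} (h₀ : A.LRun q₀ [] y₀ q) (h : A.Parses g q s q' x y) :
    A.Parses g q₀ s q' x (y₀ ++ y) := by
  obtain ⟨n, h⟩ := h
  induction h generalizing q₀ y₀ with
  | nil hrun => exact nil (h₀.append hrun)
  | terminal hrun hrest => simpa using terminal (h₀.append hrun) ⟨_, hrest⟩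
  | nonterminal hr _ hrest ih₁ => simpa using nonterminal hr (ih₁ h₀) ⟨_, hrest⟩

lemma append {q qm q' s₁ s₂ x₁ x₂ y₁ y₂} (h₁ : A.Parses g q s₁ qm x₁ y₁)
    (h₂ : A.Parses g qm s₂ q' x₂ y₂) :
    A.Parses g q (s₁ ++ s₂) q' (x₁ ++ x₂) (y₁ ++ y₂) := by
  obtain ⟨n, h₁⟩ := h₁
  induction h₁ with
  | nil hrun => simpa using lRun_append hrun h₂
  | terminal hrun _ ih => simpa using terminal hrun (ih h₂)
  | nonterminal hr hchild _ _ ih => simpa using nonterminal hr ⟨_, hchild⟩ (ih h₂)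

lemma exists_of_append {q q' x y} :
    ∀ {s₁ s₂ : List (Symbol α g.NT)}, A.Parses g q (s₁ ++ s₂) q' x y →
      ∃ qm x₁ x₂ y₁ y₂, x = x₁ ++ x₂ ∧ y = y₁ ++ y₂ ∧
        A.Parses g q s₁ qm x₁ y₁ ∧ A.Parses g qm s₂ q' x₂ y₂
  | [], _, h => ⟨q, [], x, [], y, rfl, rfl, nil (.nil q), h⟩
  | _ :: _, _, ⟨_, h⟩ => by
    cases h with
    | terminal hrun hrest =>
      obtain ⟨qm, x₁, x₂, y₁, y₂, rfl, rfl, h₁, h₂⟩ := exists_of_append ⟨_, hrest⟩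
      exact ⟨qm, _, x₂, _, y₂, rfl, (List.append_assoc ..).symm, terminal hrun h₁, h₂⟩
    | nonterminal hr hchild hrest =>
      obtain ⟨qm, x₁, x₂, y₁, y₂, rfl, rfl, h₁, h₂⟩ := exists_of_append ⟨_, hrest⟩
      exact ⟨qm, _, x₂, _, y₂, (List.append_assoc ..).symm, (List.append_assoc ..).symm,
        nonterminal hr ⟨_, hchild⟩ h₁, h₂⟩

lemma of_lRun {q q' y} : ∀ {x : List α}, A.LRun q x y q' →
    A.Parses g q (x.map .terminal) q' x y
  | [], h => nil h
  | _ :: _, h => by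
    obtain ⟨s, y₁, y₂, rfl, h₁, h₂⟩ := h.exists_split_cons
    exact terminal h₁ (of_lRun h₂)

lemma of_derives {q q' s x y} (hder : g.Derives s (x.map .terminal))
    (hrun : A.LRun q x y q') : A.Parses g q s q' x y := by
  induction hder using Relation.ReflTransGen.head_induction_on with
  | refl => exact of_lRun hrun
  | head hprod _ ih =>
    obtain ⟨r, hr, hrw⟩ := hprod
    obtain ⟨p, s', rfl, rfl⟩ := hrw.exists_parts
    obtain ⟨qm, x₁, x₂, y₁, y₂, rfl, rfl, hp, hrest⟩ := exists_of_append (by simpa using ih)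
    obtain ⟨qm', x₃, x₄, y₃, y₄, rfl, rfl, hout, hs'⟩ := exists_of_append hrest
    have hnt : A.Parses g qm [.nonterminal r.input] qm' x₃ y₃ := by
      simpa using nonterminal hr hout (nil (.nil qm'))
    simpa using hp.append (hnt.append hs')

end Parses

variable (A g) in
/-- A nonterminal together with the letter-run states before and after its subtree. -/
abbrev Sig : Type := A.LState × g.NT × A.LState

variable (A g) in
def SigParse (n : ℕ) (σ : Sig A g) (x : List α) (y : List β) : Prop :=
  ∃ r ∈ g.rules, r.input = σ.2.1 ∧ A.Parse g n σ.1 r.output σ.2.2 x y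

variable (A g) in
def SigParses (σ : Sig A g) (x : List α) (y : List β) : Prop :=
  ∃ r ∈ g.rules, r.input = σ.2.1 ∧ A.Parses g σ.1 r.output σ.2.2 x y

lemma SigParse.sigParses {n σ x y} (h : A.SigParse g n σ x y) : A.SigParses g σ x y :=
  let ⟨r, hr, hi, h⟩ := h
  ⟨r, hr, hi, n, h⟩

lemma SigParses.exists_sigParse {σ x y} (h : A.SigParses g σ x y) :
    ∃ n, A.SigParse g n σ x y :=
  let ⟨r, hr, hi, n, h⟩ := h
  ⟨n, r, hr, hi, h⟩

variable (A g) in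
def validSigs : Set (Sig A g) := {σ | ∃ r ∈ g.rules, r.input = σ.2.1}

lemma validSigs_finite : (validSigs A g).Finite := by
  refine (Set.finite_univ.prod
    ((g.rules.finite_toSet.image ContextFreeRule.input).prod Set.finite_univ)).subset ?_
  rintro ⟨q, B, q'⟩ ⟨r, hr, rfl⟩
  exact ⟨trivial, ⟨r, hr, rfl⟩, trivial⟩

lemma SigParses.mem_validSigs {σ x y} (h : A.SigParses g σ x y) : σ ∈ validSigs A g :=
  let ⟨r, hr, hi, _⟩ := h
  ⟨r, hr, hi⟩

variable (A g) in
def SilentBound (B : ℕ) : Prop :=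
  ∀ σ x, A.SigParses g σ x [] → ∃ x', A.SigParses g σ x' [] ∧ x'.length ≤ B

lemma exists_silentBound : ∃ B, A.SilentBound g B :=
  validSigs_finite.exists_length_bound fun _ _ h => h.mem_validSigs

variable (A g) in
structure Child where
  sig : Sig A g
  input : List α
  output : List β

def productive (cs : List (Child A g)) : List (Child A g) :=
  cs.filter (!·.output.isEmpty)

lemma mem_productive {c : Child A g} {cs} : c ∈ productive cs ↔ c ∈ cs ∧ c.output ≠ [] := by
  simp [productive]

lemma productive_cons_of_output_eq_nil {c : Child A g} {cs} (hc : c.output = []) :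
    productive (c :: cs) = productive cs := by
  simp [productive, hc]

lemma productive_cons_of_output_ne_nil {c : Child A g} {cs} (hc : c.output ≠ []) :
    productive (c :: cs) = c :: productive cs := by
  simp [productive, hc]

variable (A g) in
/-- One level of a parse: the children of the root, and the total length `e` of the output
written by the letter runs on the level itself. -/
inductive Level : A.LState → List (Symbol α g.NT) → A.LState → List α → List β →
    List (Child A g) → ℕ → Prop
  | nil {q q' y} : A.LRun q [] y q' → Level q [] q' [] y [] y.length
  | terminal {q q₁ q' a s x y₁ y₂ cs e} : A.LRun q [a] y₁ q₁ → Level q₁ s q' x y₂ cs e →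
      Level q (.terminal a :: s) q' (a :: x) (y₁ ++ y₂) cs (y₁.length + e)
  | nonterminal {q q₁ q' B s u x y₁ y₂ cs e} : Level q₁ s q' x y₂ cs e →
      Level q (.nonterminal B :: s) q' (u ++ x) (y₁ ++ y₂) (⟨(q, B, q₁), u, y₁⟩ :: cs) e

lemma Parse.exists_level {n q s q' x y} (h : A.Parse g n q s q' x y) :
    ∃ cs e, A.Level g q s q' x y cs e ∧
      ∀ c ∈ cs, ∃ m < n, A.SigParse g m c.sig c.input c.output := by
  induction h with
  | nil hrun => exact ⟨[], _, .nil hrun, by simp⟩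
  | terminal hrun _ ih =>
    obtain ⟨cs, e, hlev, hcs⟩ := ih
    refine ⟨cs, _, .terminal hrun hlev, fun c hc => ?_⟩
    obtain ⟨m, hm, h⟩ := hcs c hc
    exact ⟨m, by omega, h⟩
  | nonterminal hr hchild _ _ ih =>
    obtain ⟨cs, e, hlev, hcs⟩ := ih
    refine ⟨_, e, .nonterminal hlev, List.forall_mem_cons.2 ⟨⟨_, by omega, _, hr, rfl, hchild⟩,
      fun c hc => ?_⟩⟩
    obtain ⟨m, hm, h⟩ := hcs c hc
    exact ⟨m, by omega, h⟩

namespace Level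

variable {q q' : A.LState} {s : List (Symbol α g.NT)} {x : List α} {y : List β}
  {cs : List (Child A g)} {e : ℕ}

lemma length_output (h : A.Level g q s q' x y cs e) :
    y.length = e + ((productive cs).map (·.output.length)).sum := by
  induction h with
  | nil => simp [productive]
  | terminal _ _ ih => simp only [List.length_append, ih]; omega
  | @nonterminal _ _ _ _ _ _ _ y₁ _ _ _ _ ih =>
    by_cases hy₁ : y₁ = []
    · subst hy₁
      simpa [productive_cons_of_output_eq_nil (c := ⟨_, _, []⟩) rfl] using ih
    · simp only [productive_cons_of_output_ne_nil (c := ⟨_, _, y₁⟩) hy₁, List.length_append,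
        ih, List.map_cons, List.sum_cons]
      omega

lemma output_eq_flatten (h : A.Level g q s q' x y cs 0) :
    y = ((productive cs).map (·.output)).flatten := by
  generalize he : 0 = e at h
  induction h with
  | nil => simpa [productive] using List.length_eq_zero_iff.1 he.symm
  | @terminal _ _ _ _ _ _ y₁ _ _ _ _ _ ih =>
    obtain rfl : y₁ = [] := List.length_eq_zero_iff.1 (by omega)
    simpa using ih (by omega)
  | @nonterminal _ _ _ _ _ _ _ y₁ _ _ _ _ ih =>
    by_cases hy₁ : y₁ = []
    · subst hy₁
      simpa [productive_cons_of_output_eq_nil (c := ⟨_, _, []⟩) rfl] using ih he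
    · simp [productive_cons_of_output_ne_nil (c := ⟨_, _, y₁⟩) hy₁, ih he]

lemma length_children_le (h : A.Level g q s q' x y cs e) : cs.length ≤ s.length := by
  induction h <;> simp <;> omega

lemma rebuild (h : A.Level g q s q' x y cs e) (f : Child A g → List α)
    (hf : ∀ c ∈ cs, A.SigParses g c.sig (f c) c.output) :
    ∃ x', A.Parses g q s q' x' y ∧ x'.length ≤ s.length + (cs.map (f · |>.length)).sum := by
  induction h with
  | nil hrun => exact ⟨[], .nil hrun, by simp⟩
  | terminal hrun _ ih =>
    obtain ⟨x', hx', hlen⟩ := ih hf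
    exact ⟨_, .terminal hrun hx', by simp; omega⟩
  | nonterminal _ ih =>
    obtain ⟨r, hr, hi, hparse⟩ := hf _ List.mem_cons_self
    obtain ⟨x', hx', hlen⟩ := ih fun c hc => hf c (List.mem_cons_of_mem _ hc)
    refine ⟨_, hi ▸ Parses.nonterminal hr hparse hx', ?_⟩
    simp only [List.length_append, List.length_cons, List.map_cons, List.sum_cons]
    omega

lemma rebuild_productive {B : ℕ}
    (hB : A.SilentBound g B)
    (h : A.Level g q s q' x y cs e) (hcs : ∀ c ∈ cs, A.SigParses g c.sig c.input c.output)
    (f : Child A g → List α) (hf : ∀ c ∈ productive cs, A.SigParses g c.sig (f c) c.output) :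
    ∃ x', A.Parses g q s q' x' y ∧
      x'.length ≤ s.length * (B + 1) + ((productive cs).map (f · |>.length)).sum := by
  have hrep : ∀ c ∈ cs, ∃ u, A.SigParses g c.sig u c.output ∧
      (c.output = [] → u.length ≤ B) ∧ (c.output ≠ [] → u = f c) := by
    intro c hc
    by_cases hout : c.output = []
    · obtain ⟨u, hu, hlen⟩ := hB c.sig c.input (hout ▸ hcs c hc)
      exact ⟨u, hout ▸ hu, fun _ => hlen, fun h => absurd hout h⟩
    · exact ⟨f c, hf c (mem_productive.2 ⟨hc, hout⟩), fun h => absurd h hout, fun _ => rfl⟩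
  choose! f' hf' hsilent hprod using hrep
  obtain ⟨x', hx', hlen⟩ := h.rebuild f' hf'
  refine ⟨x', hx', ?_⟩
  have hsum := List.sum_map_le_sum_map_filter_add cs (!·.output.isEmpty) (f' · |>.length)
    (B := B) fun c hc hp => hsilent c hc (by simpa using hp)
  have heq : (productive cs).map (f' · |>.length) = (productive cs).map (f · |>.length) :=
    List.map_congr_left fun c hc => by
      rw [hprod c (mem_productive.1 hc).1 (mem_productive.1 hc).2]
  rw [← productive, heq] at hsum
  nlinarith [h.length_children_le]

lemma output_eq_of_productive_eq_singleton {c₀ : Child A g} (h : A.Level g q s q' x y cs 0)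
    (hc₀ : productive cs = [c₀]) : y = c₀.output := by
  simpa [hc₀] using h.output_eq_flatten

lemma exists_parses_of_productive_eq_singleton {B : ℕ}
    (hB : A.SilentBound g B)
    (h : A.Level g q s q' x y cs e) (hcs : ∀ c ∈ cs, A.SigParses g c.sig c.input c.output)
    {c₀ : Child A g} (hc₀ : productive cs = [c₀]) {u : List α}
    (hu : A.SigParses g c₀.sig u c₀.output) :
    ∃ x', A.Parses g q s q' x' y ∧ x'.length ≤ u.length + s.length * (B + 1) := by
  obtain ⟨x', hx', hlen⟩ := h.rebuild_productive hB hcs (fun _ => u) fun c hc => by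
    rw [hc₀, List.mem_singleton] at hc
    exact hc ▸ hu
  exact ⟨x', hx', by simpa [hc₀, add_comm] using hlen⟩

lemma length_output_lt (h : A.Level g q s q' x y cs e)
    (hbr : ¬(e = 0 ∧ (productive cs).length = 1)) {c : Child A g} (hc : c ∈ productive cs) :
    c.output.length < y.length := by
  classical
  rw [h.length_output, ← List.sum_map_erase _ hc]
  have hrest : ((productive cs).erase c).length ≤
      (((productive cs).erase c).map (·.output.length)).sum := by
    rw [← List.length_map (f := fun d : Child A g => d.output.length)]
    refine List.length_le_sum_of_one_le _ ?_
    simp only [List.mem_map]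
    rintro _ ⟨d, hd, rfl⟩
    exact List.length_pos_iff.2 (mem_productive.1 ((List.erase_subset) hd)).2
  have hlen := List.length_erase_of_mem hc
  have hpos := List.length_pos_of_mem hc
  have hout := List.length_pos_iff.2 (mem_productive.1 hc).2
  by_cases he : e = 0
  · have := fun h1 => hbr ⟨he, h1⟩
    omega
  · omega

lemma length_add_le_of_branching {x' : List α} {B D K : ℕ} {f : Child A g → List α}
    (h : A.Level g q s q' x y cs e) (hbr : ¬(e = 0 ∧ (productive cs).length = 1))
    (hy : y ≠ []) (hK : s.length * (B + 1) + D < K)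
    (hf : ∀ c ∈ productive cs, (f c).length + K ≤ 2 * K * c.output.length)
    (hx' : x'.length ≤ s.length * (B + 1) + ((productive cs).map (f · |>.length)).sum) :
    x'.length + D + K ≤ 2 * K * y.length := by
  have hsum := List.sum_map_add_mul_length_le _ _ _ hf
  rw [List.sum_map_mul_left] at hsum
  have hlen := h.length_output
  have hy' := List.length_pos_iff.2 hy
  by_cases he : e = 0
  · have hp : (productive cs).length ≠ 1 := fun h1 => hbr ⟨he, h1⟩
    have hp0 : (productive cs).length ≠ 0 := fun h0 =>
      hy (by simpa [List.length_eq_zero_iff.1 h0, he] using hlen)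
    have : K * 2 ≤ K * (productive cs).length := Nat.mul_le_mul_left K (by omega)
    nlinarith
  · have : K * 1 ≤ K * e := Nat.mul_le_mul_left K (by omega)
    nlinarith

end Level

variable (A g) in
def Hosts (k : ℕ) (y : List β) (σ τ : Sig A g) : Prop :=
  ∀ u, A.SigParses g τ u y → ∃ x, A.SigParses g σ x y ∧ x.length ≤ u.length + k

namespace Hosts

variable {k m : ℕ} {y : List β} {σ ρ τ : Sig A g}

lemma refl : A.Hosts g 0 y σ σ := fun u hu => ⟨u, hu, le_rfl⟩

lemma trans (h₁ : A.Hosts g k y σ ρ) (h₂ : A.Hosts g m y ρ τ) : A.Hosts g (k + m) y σ τ :=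
  fun u hu =>
    let ⟨v, hv, hvlen⟩ := h₂ u hu
    let ⟨x, hx, hxlen⟩ := h₁ v hv
    ⟨x, hx, by omega⟩

lemma mono (h : A.Hosts g k y σ τ) (hkm : k ≤ m) : A.Hosts g m y σ τ :=
  fun u hu =>
    let ⟨x, hx, hxlen⟩ := h u hu
    ⟨x, hx, by omega⟩

lemma of_relPath {l} (h : RelPath (fun σ τ => σ ∈ validSigs A g ∧ A.Hosts g k y σ τ) σ τ l) :
    A.Hosts g (l.length * k) y σ τ := by
  induction h with
  | nil => simpa using refl
  | cons hab _ ih => exact (hab.2.trans ih).mono (by simp [add_mul, add_comm])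

lemma of_reflTransGen
    (h : Relation.ReflTransGen (fun σ τ => σ ∈ validSigs A g ∧ A.Hosts g k y σ τ) σ τ) :
    A.Hosts g ((validSigs A g).ncard * k) y σ τ := by
  obtain ⟨l, hpath, hlen⟩ := h.exists_relPath_length_le validSigs_finite fun _ _ h => h.1
  exact (of_relPath hpath).mono (Nat.mul_le_mul_right k hlen)

end Hosts

variable (A g) in
def Branching (τ : Sig A g) (y : List β) : Prop :=
  ∃ r ∈ g.rules, r.input = τ.2.1 ∧ ∃ x cs e, A.Level g τ.1 r.output τ.2.2 x y cs e ∧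
    (∀ c ∈ cs, A.SigParses g c.sig c.input c.output) ∧ ¬(e = 0 ∧ (productive cs).length = 1)

/-- A level that writes nothing itself and has a single productive child passes `y` on to that
child and hosts its parses; below a chain of such levels lies a branching one. -/
lemma SigParse.exists_branching {B W : ℕ}
    (hB : A.SilentBound g B)
    (hW : ∀ r ∈ g.rules, r.output.length ≤ W) {n : ℕ} {σ : Sig A g} {x : List α}
    {y : List β} (h : A.SigParse g n σ x y) :
    ∃ τ, Relation.ReflTransGen
      (fun σ τ => σ ∈ validSigs A g ∧ A.Hosts g (W * (B + 1)) y σ τ) σ τ ∧ A.Branching g τ y := by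
  induction n using Nat.strong_induction_on generalizing σ x with
  | _ n ih =>
  obtain ⟨r, hr, hi, hparse⟩ := h
  obtain ⟨cs, e, hlev, hcs⟩ := hparse.exists_level
  have hcs' : ∀ c ∈ cs, A.SigParses g c.sig c.input c.output := fun c hc => by
    obtain ⟨_, _, hc⟩ := hcs c hc
    exact hc.sigParses
  by_cases hunary : e = 0 ∧ (productive cs).length = 1
  · obtain ⟨c₀, hc₀⟩ := List.length_eq_one_iff.1 hunary.2
    rw [hunary.1] at hlev
    have hy := hlev.output_eq_of_productive_eq_singleton hc₀
    obtain ⟨m, hm, hchild⟩ := hcs c₀ (mem_productive.1 (hc₀ ▸ List.mem_singleton_self c₀)).1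
    obtain ⟨τ, hpath, hτ⟩ := ih m hm (hy ▸ hchild)
    refine ⟨τ, .head ⟨⟨r, hr, hi⟩, fun u hu => ?_⟩ hpath, hτ⟩
    obtain ⟨x', hx', hlen⟩ := hlev.exists_parses_of_productive_eq_singleton hB hcs' hc₀ (hy ▸ hu)
    exact ⟨x', ⟨r, hr, hi, hx'⟩, by nlinarith [hW r hr]⟩
  · exact ⟨σ, .refl, r, hr, hi, x, cs, e, hlev, hcs', hunary⟩

/-- On the way from `σ` down to the branching level, each of the at most `|validSigs|` hosting
steps and the rebuilt branching level itself cost at most `W (B + 1)` input letters; this is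
where the lower bound on `K` comes from. -/
lemma SigParses.exists_short_of_ne_nil {B W K : ℕ}
    (hB : A.SilentBound g B)
    (hW : ∀ r ∈ g.rules, r.output.length ≤ W)
    (hK : ((validSigs A g).ncard + 1) * W * (B + 1) < K) {y : List β} (hy : y ≠ [])
    {σ : Sig A g} {x : List α} (h : A.SigParses g σ x y) :
    ∃ x', A.SigParses g σ x' y ∧ x'.length + K ≤ 2 * K * y.length := by
  induction hn : y.length using Nat.strong_induction_on generalizing y σ x with
  | _ n ih =>
  obtain ⟨m, hm⟩ := h.exists_sigParse
  obtain ⟨τ, hpath, r, hr, hi, x₀, cs, e, hlev, hcs, hbr⟩ := hm.exists_branching hB hW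
  have hshort : ∀ c ∈ productive cs, ∃ u, A.SigParses g c.sig u c.output ∧
      u.length + K ≤ 2 * K * c.output.length := fun c hc =>
    ih _ (hn ▸ hlev.length_output_lt hbr hc) (mem_productive.1 hc).2
      (hcs c (mem_productive.1 hc).1) rfl
  choose! f hf hflen using hshort
  obtain ⟨xτ, hxτ, hlen⟩ := hlev.rebuild_productive hB hcs f hf
  obtain ⟨xσ, hxσ, hlenσ⟩ := Hosts.of_reflTransGen hpath xτ ⟨r, hr, hi, hxτ⟩
  refine ⟨xσ, hxσ, ?_⟩
  have hK' : r.output.length * (B + 1) + (validSigs A g).ncard * (W * (B + 1)) < K := by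
    nlinarith [hW r hr]
  have := hlev.length_add_le_of_branching hbr hy hK' hflen hlen
  rw [← hn]
  omega

lemma SigParses.exists_short {B W K : ℕ}
    (hB : A.SilentBound g B)
    (hW : ∀ r ∈ g.rules, r.output.length ≤ W)
    (hK : ((validSigs A g).ncard + 1) * W * (B + 1) < K) {σ : Sig A g} {x : List α}
    {y : List β} (h : A.SigParses g σ x y) :
    ∃ x', A.SigParses g σ x' y ∧ x'.length ≤ 2 * K * y.length + B := by
  rcases eq_or_ne y [] with rfl | hy
  · obtain ⟨x', hx', hlen⟩ := hB σ x h
    exact ⟨x', hx', by simpa using hlen⟩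
  · obtain ⟨x', hx', hlen⟩ := h.exists_short_of_ne_nil hB hW hK hy
    exact ⟨x', hx', by omega⟩

lemma Parses.exists_of_singleton {q q' : A.LState} {B : g.NT} {x : List α} {y : List β}
    (h : A.Parses g q [.nonterminal B] q' x y) :
    ∃ q₁ y₁ y₂, A.SigParses g (q, B, q₁) x y₁ ∧ A.LRun q₁ [] y₂ q' ∧ y = y₁ ++ y₂ := by
  obtain ⟨n, h⟩ := h
  cases h with
  | nonterminal hr hchild hrest =>
    cases hrest with
    | nil hrun =>
      rw [List.append_nil]
      exact ⟨_, _, _, ⟨_, hr, rfl, _, hchild⟩, hrun, rfl⟩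

lemma SigParses.parses_singleton {q q₁ q' : A.LState} {B : g.NT} {x : List α} {y₁ y₂ : List β}
    (h : A.SigParses g (q, B, q₁) x y₁) (h' : A.LRun q₁ [] y₂ q') :
    A.Parses g q [.nonterminal B] q' x (y₁ ++ y₂) := by
  obtain ⟨r, hr, rfl, hp⟩ := h
  simpa using Parses.nonterminal hr hp (.nil h')

end Transducer

open Transducer in
theorem exists_preimage_length_le_of_isContextFree {α β : Type}
    {t : List α → Option (List β)} (hrat : IsRationalFun t) {X : Set (List α)}
    (hcf : Language.IsContextFree (X : Language α)) :
    ∃ C, 0 < C ∧ ∀ x ∈ X, ∀ y, t x = some y →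
      ∃ x' ∈ X, t x' = some y ∧ x'.length ≤ C * (y.length + 1) := by
  obtain ⟨A, hA⟩ := hrat
  obtain ⟨g, rfl⟩ := hcf
  obtain ⟨B, hB⟩ := exists_silentBound (A := A) (g := g)
  obtain ⟨W, hW⟩ : ∃ W, ∀ r ∈ g.rules, r.output.length ≤ W :=
    ⟨g.rules.sup (·.output.length), fun r hr => Finset.le_sup (f := (·.output.length)) hr⟩
  obtain ⟨K, hK⟩ : ∃ K, ((validSigs A g).ncard + 1) * W * (B + 1) < K := ⟨_, Nat.lt_succ_self _⟩
  refine ⟨2 * K + B + 1, by omega, fun x hx y hxy => ?_⟩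
  obtain ⟨qi, hI, qf, hF, y', hrun, rfl⟩ := mem_T_iff_lRun.1 ((hA x y).1 hxy)
  obtain ⟨q₁, y₁, y₂, hsig, hrun', rfl⟩ :=
    (Parses.of_derives ((g.mem_language_iff x).1 hx) hrun).exists_of_singleton
  obtain ⟨x', hx', hlen⟩ := hsig.exists_short hB hW hK
  obtain ⟨hder, hrun''⟩ := (hx'.parses_singleton hrun').sound
  refine ⟨x', (g.mem_language_iff x').2 hder,
    (hA _ _).2 (mem_T_iff_lRun.2 ⟨qi, hI, qf, hF, _, hrun'', rfl⟩), ?_⟩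
  simp only [List.length_append]
  nlinarith

lemma finite_setOf_mem_length_le {α : Type} [Finite α] (X : Set (List α)) (n : ℕ) :
    {x | x ∈ X ∧ x.length ≤ n}.Finite :=
  (List.finite_length_le α n).subset fun _ hx => hx.2

lemma langGrowth_optImage_le_growthOf {α β : Type} [Finite α] {t : List α → Option (List β)}
    {X : Set (List α)} {C : ℕ}
    (h : ∀ x ∈ X, ∀ y, t x = some y → ∃ x' ∈ X, t x' = some y ∧ x'.length ≤ C * (y.length + 1))
    (n : ℕ) : langGrowth (optImage t X) n ≤ growthOf t X (C * (n + 1)) := by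
  refine Set.ncard_le_ncard_of_injOn some ?_ (Option.some_injective _).injOn
    ((finite_setOf_mem_length_le X _).image t)
  rintro y ⟨⟨x, hx, hxy⟩, hy⟩
  obtain ⟨x', hx', hx'y, hlen⟩ := h x hx y hxy
  exact ⟨x', ⟨hx', hlen.trans (Nat.mul_le_mul_left C (by omega))⟩, hx'y⟩

lemma cev_head?_getD {α Y : Type} (t : List α → Y) (x : List α) :
    (cev t x).head?.getD (t []) = t x := by
  cases x with
  | nil => rfl
  | cons a l =>
    have : l.tails ≠ [] := by cases l <;> simp
    simp [cev, List.dropLast_cons_of_ne_nil this]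

lemma growthOf_le_growthOf_cev {α Y : Type} [Finite α] (t : List α → Y) (X : Set (List α))
    (n : ℕ) : growthOf t X n ≤ growthOf (cev t) X n := by
  have ht : t = (fun l => l.head?.getD (t [])) ∘ cev t := funext fun x => (cev_head?_getD t x).symm
  unfold growthOf
  conv_lhs => rw [ht, Set.image_comp]
  exact Set.ncard_image_le ((finite_setOf_mem_length_le X n).image _)

lemma GrowsExponentially.mono {γ γ' : ℕ → ℕ} (h : GrowsExponentially γ)
    (hle : ∀ n, γ n ≤ γ' n) : GrowsExponentially γ' := by
  obtain ⟨c, hc, hinf⟩ := h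
  refine ⟨c, hc, fun m => ?_⟩
  obtain ⟨n, hn, hcn⟩ := hinf m
  exact ⟨n, hn, hcn.trans (by exact_mod_cast hle n)⟩

lemma GrowsExponentially.of_le_comp {f γ : ℕ → ℕ} {C : ℕ} (hf : GrowsExponentially f)
    (hC : 0 < C) (hle : ∀ n, f n ≤ γ (C * (n + 1))) : GrowsExponentially γ := by
  obtain ⟨c, hc, hinf⟩ := hf
  set d := c ^ ((2 * C : ℕ) : ℝ)⁻¹
  have hd : 1 < d := Real.one_lt_rpow hc (by positivity)
  have hdc : d ^ (2 * C) = c := Real.rpow_inv_natCast_pow (by linarith) (by omega)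
  refine ⟨d, hd, fun m => ?_⟩
  obtain ⟨n, hn, hcn⟩ := hinf (m + 1)
  refine ⟨C * (n + 1), by nlinarith, ?_⟩
  calc d ^ (C * (n + 1)) ≤ d ^ (2 * C * n) := pow_le_pow_right₀ hd.le (by nlinarith)
    _ = c ^ n := by rw [pow_mul, hdc]
    _ ≤ f n := hcn
    _ ≤ γ (C * (n + 1)) := by exact_mod_cast hle n

theorem statement2_general {α β : Type} [Fintype α]
    (t : List α → Option (List β)) (hrat : IsRationalFun t)
    (X : Set (List α))
    (hcf : Language.IsContextFree (X : Language α))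
    (hexp : GrowsExponentially (langGrowth (optImage t X))) :
    GrowsExponentially (growthOf t X) ∧ GrowsExponentially (growthOf (cev t) X) := by
  obtain ⟨C, hC, hshort⟩ := exists_preimage_length_le_of_isContextFree hrat hcf
  have ht := hexp.of_le_comp hC (langGrowth_optImage_le_growthOf hshort)
  exact ⟨ht, ht.mono (growthOf_le_growthOf_cev t X)⟩

/-- if `t` is rational with suffix-closed domain, `X ⊆ dom t` is
context-free and `t(X)` has exponential growth, then the `t`-growth and the
`⟨t⟩`-growth of `X` are exponential. -/
theorem statement2 {α β : Type} [Fintype α] [Fintype β]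
    (t : List α → Option (List β)) (hrat : IsRationalFun t)
    (hsc : SuffixClosed (pdom t))
    (X : Set (List α)) (hX : X ⊆ pdom t)
    (hcf : Language.IsContextFree (X : Language α))
    (hexp : GrowsExponentially (langGrowth (optImage t X))) :
    GrowsExponentially (growthOf t X) ∧ GrowsExponentially (growthOf (cev t) X) :=
  statement2_general t hrat X hcf hexp
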